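/- arXiv:2109.09082 — 7 statements merged into one kernel-verified Lean document; each statement's English description precedes it below -/
import Mathlib

section
/- Let {Γ_n} be a sequence of real numbers that does not decrease at infinity, in the sense that there exists a subsequence {Γ_{n_j}} of {Γ_n} with Γ_{n_j} < Γ_{n_j + 1} for all j ≥ 0. Let n_0 be large enough that {k ≤ n_0 : Γ_k ≤ Γ_{k+1}} is nonempty, and for n ≥ n_0 define σ(n) = max{k ≤ n : Γ_k ≤ Γ_{k+1}}. Then {σ(n)}_{n ≥ n_0} is a nondecreasing sequence with lim_{n→∞} σ(n) = ∞, and for all n ≥ n_0 one has Γ_{σ(n)} ≤ Γ_{σ(n)+1} and Γ_n ≤ Γ_{σ(n)+1}. -/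
open Filter

theorem stmt_2 (Γ : ℕ → ℝ)
    (hnd : ∃ φ : ℕ → ℕ, StrictMono φ ∧ ∀ j, Γ (φ j) < Γ (φ j + 1))
    (n₀ : ℕ) (hn₀ : ∃ k ≤ n₀, Γ k ≤ Γ (k + 1))
    (σ : ℕ → ℕ)
    (hσ : ∀ n, n₀ ≤ n →
      σ n ≤ n ∧ Γ (σ n) ≤ Γ (σ n + 1) ∧ ∀ k ≤ n, Γ k ≤ Γ (k + 1) → k ≤ σ n) :
    (∀ m n, n₀ ≤ m → m ≤ n → σ m ≤ σ n) ∧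
    Tendsto σ atTop atTop ∧
    ∀ n, n₀ ≤ n → Γ (σ n) ≤ Γ (σ n + 1) ∧ Γ n ≤ Γ (σ n + 1) := by
  refine ⟨?_, ?_, ?_⟩
  · intro m n hm hmn
    obtain ⟨h1, h2, h3⟩ := hσ n (hm.trans hmn)
    exact h3 (σ m) ((hσ m hm).1.trans hmn) (hσ m hm).2.1
  · obtain ⟨φ, hφ, hΓ⟩ := hnd
    rw [tendsto_atTop_atTop]
    intro b
    refine ⟨max n₀ (φ b), fun n hn => ?_⟩
    have h1 := hσ n (le_trans (le_max_left _ _) hn)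
    have := h1.2.2 (φ b) (le_trans (le_max_right _ _) hn) (le_of_lt (hΓ b))
    exact le_trans (hφ.id_le b) this
  · intro n hn
    obtain ⟨h1, h2, h3⟩ := hσ n hn
    refine ⟨h2, ?_⟩
    have key : ∀ d m, m + d = n → σ n < m → Γ n ≤ Γ m := by
      intro d
      induction d with
      | zero => intro m hm _; simp at hm; rw [hm]
      | succ d ih =>
        intro m hm hlt
        have h4 : Γ (m + 1) < Γ m := by
          by_contra h
          push_neg at h
          exact absurd (h3 m (by omega) h) (by omega)
        have := ih (m + 1) (by omega) (by omega)
        linarith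
    rcases eq_or_lt_of_le h1 with he | hl
    · rw [he] at h2; rw [he]
      exact h2
    · exact key (n - σ n - 1) (σ n + 1) (by omega) (by omega)
end

section
/- Let H be a real Hilbert space, γ > 0, τ > 0, B : H → H a γ-cocoercive operator, and J : H → H a firmly nonexpansive map. Let z ∈ H satisfy J(z − τ·B z) = z, let w ∈ H, and set x⁺ = J(w − τ·B w). Then ‖x⁺ − z‖² ≤ ‖w − z‖² − 2γτ·‖B w − B z − (w − x⁺)/(2γ)‖² + (τ/(2γ) − 1)·‖w − x⁺‖². -/
open scoped RealInnerProductSpace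

theorem stmt_7 {H : Type*} [NormedAddCommGroup H] [InnerProductSpace ℝ H] [CompleteSpace H]
    (γ τ : ℝ) (hγ : 0 < γ) (hτ : 0 < τ)
    (B : H → H) (hB : ∀ x y : H, γ * ‖B x - B y‖ ^ 2 ≤ ⟪B x - B y, x - y⟫)
    (J : H → H)
    (hJ : ∀ u v : H, ‖J u - J v‖ ^ 2 ≤ ‖u - v‖ ^ 2 - ‖(u - J u) - (v - J v)‖ ^ 2)
    (z : H) (hz : J (z - τ • B z) = z)
    (w : H) (xp : H) (hxp : xp = J (w - τ • B w)) :
    ‖xp - z‖ ^ 2 ≤ ‖w - z‖ ^ 2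
      - 2 * γ * τ * ‖B w - B z - (1 / (2 * γ)) • (w - xp)‖ ^ 2
      + (τ / (2 * γ) - 1) * ‖w - xp‖ ^ 2 := by
  have h1 := hJ (w - τ • B w) (z - τ • B z)
  rw [hz, ← hxp] at h1
  set d := B w - B z with hd
  set s := w - z with hs
  set e := w - xp with he
  have hv1 : (w - τ • B w) - (z - τ • B z) = s - τ • d := by
    rw [hs, hd, smul_sub]; abel
  have hv2 : ((w - τ • B w) - xp) - ((z - τ • B z) - z) = e - τ • d := by
    rw [he, hd, smul_sub]; abel
  rw [hv1, hv2] at h1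
  have hcoco := hB w z
  rw [← hd, ← hs] at hcoco
  have eA : ‖s - τ • d‖ ^ 2 = ‖s‖ ^ 2 - 2 * (τ * ⟪s, d⟫) + τ ^ 2 * ‖d‖ ^ 2 := by
    rw [norm_sub_sq_real, real_inner_smul_right, norm_smul]
    simp [abs_of_pos hτ, mul_pow]
  have eB : ‖e - τ • d‖ ^ 2 = ‖e‖ ^ 2 - 2 * (τ * ⟪e, d⟫) + τ ^ 2 * ‖d‖ ^ 2 := by
    rw [norm_sub_sq_real, real_inner_smul_right, norm_smul]
    simp [abs_of_pos hτ, mul_pow]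
  have eC : ‖d - (1 / (2 * γ)) • e‖ ^ 2
      = ‖d‖ ^ 2 - 2 * ((1 / (2 * γ)) * ⟪d, e⟫) + (1 / (2 * γ)) ^ 2 * ‖e‖ ^ 2 := by
    rw [norm_sub_sq_real, real_inner_smul_right, norm_smul]
    have : |1 / (2 * γ)| = 1 / (2 * γ) := abs_of_pos (by positivity)
    rw [Real.norm_eq_abs, this]; ring
  have hcomm : ⟪d, e⟫ = ⟪e, d⟫ := real_inner_comm _ _
  have hcomm2 : ⟪d, s⟫ = ⟪s, d⟫ := real_inner_comm _ _
  rw [eA, eB] at h1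
  rw [eC]
  have hγ' : γ ≠ 0 := ne_of_gt hγ
  have key : 2 * γ * τ * ((1 / (2 * γ)) * ⟪d, e⟫) = τ * ⟪e, d⟫ := by
    rw [hcomm]; field_simp
  have key2 : 2 * γ * τ * ((1 / (2 * γ)) ^ 2 * ‖e‖ ^ 2) = (τ / (2 * γ)) * ‖e‖ ^ 2 := by
    field_simp
  nlinarith [h1, hcoco, hcomm2, mul_pos hτ hγ]
end

section
/- Let H be a real Hilbert space, γ > 0, ε > 0, and B : H → H a γ-cocoercive operator. For each n ≥ 1 let J_n : H → H be firmly nonexpansive and τ_n ∈ (ε, 2γ − ε), θ_n ∈ [0,1]. Let z ∈ H satisfy J_n(z − τ_n·B z) = z for all n. Given x_0, x_1 ∈ H, define for n ≥ 1: w_n = x_{n−1} + θ_n·(x_n − x_{n−1}) and x_{n+1} = J_n(w_n − τ_n·B w_n). Then for every n, ‖x_n − z‖ ≤ max{‖x_0 − z‖, ‖x_1 − z‖}; in particular the sequences {x_n} and {w_n} are bounded. -/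
open scoped RealInnerProductSpace

theorem stmt_8 {H : Type*} [NormedAddCommGroup H] [InnerProductSpace ℝ H] [CompleteSpace H]
    (γ ε : ℝ) (hγ : 0 < γ) (hε : 0 < ε)
    (B : H → H) (hB : ∀ x y : H, γ * ‖B x - B y‖ ^ 2 ≤ ⟪B x - B y, x - y⟫)
    (J : ℕ → H → H)
    (hJ : ∀ n, 1 ≤ n → ∀ u v : H,
      ‖J n u - J n v‖ ^ 2 ≤ ‖u - v‖ ^ 2 - ‖(u - J n u) - (v - J n v)‖ ^ 2)
    (τ θ : ℕ → ℝ)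
    (hτ : ∀ n, 1 ≤ n → τ n ∈ Set.Ioo ε (2 * γ - ε))
    (hθ : ∀ n, 1 ≤ n → θ n ∈ Set.Icc (0 : ℝ) 1)
    (z : H) (hz : ∀ n, 1 ≤ n → J n (z - τ n • B z) = z)
    (x w : ℕ → H)
    (hw : ∀ n, 1 ≤ n → w n = x (n - 1) + θ n • (x n - x (n - 1)))
    (hx : ∀ n, 1 ≤ n → x (n + 1) = J n (w n - τ n • B (w n))) :
    (∀ n, ‖x n - z‖ ≤ max ‖x 0 - z‖ ‖x 1 - z‖) ∧
    ∃ M : ℝ, (∀ n, ‖x n‖ ≤ M) ∧ (∀ n, 1 ≤ n → ‖w n‖ ≤ M) := by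
  set M0 : ℝ := max ‖x 0 - z‖ ‖x 1 - z‖ with hM0
  -- Forward-backward step is nonexpansive towards z
  have key : ∀ n, 1 ≤ n → ∀ u : H, ‖J n (u - τ n • B u) - z‖ ≤ ‖u - z‖ := by
    intro n hn u
    have h1 := hJ n hn (u - τ n • B u) (z - τ n • B z)
    rw [hz n hn] at h1
    have hτn := hτ n hn
    have hτpos : 0 < τ n := hε.trans hτn.1
    have hτlt : τ n < 2 * γ := lt_of_lt_of_le hτn.2 (by linarith)
    have heq : (u - τ n • B u) - (z - τ n • B z) = (u - z) - τ n • (B u - B z) := by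
      rw [smul_sub]; abel
    have hexp : ‖(u - z) - τ n • (B u - B z)‖ ^ 2
        = ‖u - z‖ ^ 2 - 2 * (τ n * ⟪B u - B z, u - z⟫) + τ n ^ 2 * ‖B u - B z‖ ^ 2 := by
      rw [norm_sub_sq_real, real_inner_smul_right, norm_smul, mul_pow]
      rw [real_inner_comm]
      simp only [Real.norm_eq_abs, sq_abs]
    have hcoco := hB u z
    have hnn : 0 ≤ ‖B u - B z‖ ^ 2 := sq_nonneg _
    have h2 : ‖(u - τ n • B u) - (z - τ n • B z)‖ ^ 2 ≤ ‖u - z‖ ^ 2 := by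
      rw [heq, hexp]
      nlinarith [mul_le_mul_of_nonneg_left hcoco hτpos.le,
        mul_nonneg (mul_nonneg hτpos.le (by linarith : (0:ℝ) ≤ 2 * γ - τ n)) hnn]
    have h3 : ‖J n (u - τ n • B u) - z‖ ^ 2 ≤ ‖u - z‖ ^ 2 := by
      nlinarith [h1, h2, sq_nonneg ‖(u - τ n • B u) - J n (u - τ n • B u) -
        ((z - τ n • B z) - z)‖]
    nlinarith [norm_nonneg (J n (u - τ n • B u) - z), norm_nonneg (u - z)]
  -- convex combination bound on w
  have wbound : ∀ n, 1 ≤ n → ‖w n - z‖ ≤ max ‖x (n-1) - z‖ ‖x n - z‖ := by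
    intro n hn
    have hθn := hθ n hn
    have : w n - z = (1 - θ n) • (x (n-1) - z) + θ n • (x n - z) := by
      rw [hw n hn]; module
    rw [this]
    calc ‖(1 - θ n) • (x (n-1) - z) + θ n • (x n - z)‖
        ≤ ‖(1 - θ n) • (x (n-1) - z)‖ + ‖θ n • (x n - z)‖ := norm_add_le _ _
      _ = (1 - θ n) * ‖x (n-1) - z‖ + θ n * ‖x n - z‖ := by
          rw [norm_smul, norm_smul, Real.norm_eq_abs, Real.norm_eq_abs,
            abs_of_nonneg (by linarith [hθn.2]), abs_of_nonneg hθn.1]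
      _ ≤ (1 - θ n) * max ‖x (n-1) - z‖ ‖x n - z‖ + θ n * max ‖x (n-1) - z‖ ‖x n - z‖ :=
          add_le_add
            (mul_le_mul_of_nonneg_left (le_max_left _ _) (by linarith [hθn.2]))
            (mul_le_mul_of_nonneg_left (le_max_right _ _) hθn.1)
      _ = max ‖x (n-1) - z‖ ‖x n - z‖ := by ring
  -- main induction
  have main : ∀ n, ‖x n - z‖ ≤ M0 ∧ ‖x (n+1) - z‖ ≤ M0 := by
    intro n
    induction n with
    | zero => exact ⟨le_max_left _ _, le_max_right _ _⟩
    | succ k ih =>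
      refine ⟨ih.2, ?_⟩
      have hk1 : 1 ≤ k + 1 := Nat.le_add_left 1 k
      rw [hx (k+1) hk1]
      calc ‖J (k+1) (w (k+1) - τ (k+1) • B (w (k+1))) - z‖
          ≤ ‖w (k+1) - z‖ := key (k+1) hk1 _
        _ ≤ max ‖x (k+1-1) - z‖ ‖x (k+1) - z‖ := wbound (k+1) hk1
        _ ≤ M0 := by
            simp only [Nat.add_sub_cancel]
            exact max_le ih.1 ih.2
  have hxb : ∀ n, ‖x n - z‖ ≤ M0 := fun n => (main n).1
  refine ⟨hxb, M0 + ‖z‖, fun n => ?_, fun n hn => ?_⟩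
  · calc ‖x n‖ = ‖x n - z + z‖ := by simp
      _ ≤ ‖x n - z‖ + ‖z‖ := norm_add_le _ _
      _ ≤ M0 + ‖z‖ := by linarith [hxb n]
  · calc ‖w n‖ = ‖w n - z + z‖ := by simp
      _ ≤ ‖w n - z‖ + ‖z‖ := norm_add_le _ _
      _ ≤ M0 + ‖z‖ := by
          have := wbound n hn
          have h := max_le (hxb (n-1)) (hxb n)
          linarith [le_trans this h]
end

section
/- Let H be a real Hilbert space, γ > 0, τ ∈ (0, 2γ), B : H → H a γ-cocoercive operator, and J : H → H a firmly nonexpansive map. Let z ∈ H satisfy J(z − τ·B z) = z. Let θ ∈ [0,1], α, β ∈ (0,1) with α + β ≤ 1, and x, x' ∈ H. Set w = x' + θ·(x − x'), z_w = J(w − τ·B w), and x⁺ = (1 − α − β)·w + α·z_w. Then ‖x⁺ − z‖² ≤ (1 − β)·[θ‖x − z‖² + (1 − θ)‖x' − z‖² − θ(1 − θ)‖x − x'‖²] + β‖z‖² + α·(τ/(2γ) − 2 + α + β)·‖w − z_w‖² − 2γτα·‖B w − B z − (w − z_w)/(2γ)‖². -/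
open scoped RealInnerProductSpace

theorem stmt_10 {H : Type*} [NormedAddCommGroup H] [InnerProductSpace ℝ H] [CompleteSpace H]
    (γ τ : ℝ) (hγ : 0 < γ) (hτ : τ ∈ Set.Ioo 0 (2 * γ))
    (B : H → H) (hB : ∀ x y : H, γ * ‖B x - B y‖ ^ 2 ≤ ⟪B x - B y, x - y⟫)
    (J : H → H)
    (hJ : ∀ u v : H, ‖J u - J v‖ ^ 2 ≤ ‖u - v‖ ^ 2 - ‖(u - J u) - (v - J v)‖ ^ 2)
    (z : H) (hz : J (z - τ • B z) = z)
    (θ α β : ℝ) (hθ : θ ∈ Set.Icc (0 : ℝ) 1)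
    (hα : α ∈ Set.Ioo (0 : ℝ) 1) (hβ : β ∈ Set.Ioo (0 : ℝ) 1) (hαβ : α + β ≤ 1)
    (x x' : H) (w zw xp : H)
    (hw : w = x' + θ • (x - x'))
    (hzw : zw = J (w - τ • B w))
    (hxp : xp = (1 - α - β) • w + α • zw) :
    ‖xp - z‖ ^ 2 ≤
      (1 - β) * (θ * ‖x - z‖ ^ 2 + (1 - θ) * ‖x' - z‖ ^ 2 - θ * (1 - θ) * ‖x - x'‖ ^ 2)
      + β * ‖z‖ ^ 2
      + α * (τ / (2 * γ) - 2 + α + β) * ‖w - zw‖ ^ 2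
      - 2 * γ * τ * α * ‖B w - B z - (1 / (2 * γ)) • (w - zw)‖ ^ 2 := by
  have hγ0 : γ ≠ 0 := ne_of_gt hγ
  -- θ-convexity identity for ‖w - z‖²
  have hD : ‖w - z‖ ^ 2 =
      θ * ‖x - z‖ ^ 2 + (1 - θ) * ‖x' - z‖ ^ 2 - θ * (1 - θ) * ‖x - x'‖ ^ 2 := by
    rw [hw]
    simp only [← real_inner_self_eq_norm_sq, inner_sub_left, inner_sub_right, inner_add_left,
      inner_add_right, real_inner_smul_left, real_inner_smul_right, real_inner_comm]
    ring
  -- firm nonexpansiveness consequence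
  have hA : ‖zw - z‖ ^ 2 ≤ ‖w - z‖ ^ 2 - ‖w - zw‖ ^ 2
      - 2 * τ * ⟪B w - B z, w - z⟫ + 2 * τ * ⟪B w - B z, w - zw⟫ := by
    have h := hJ (w - τ • B w) (z - τ • B z)
    rw [hz, ← hzw] at h
    have e1 : ‖(w - τ • B w) - (z - τ • B z)‖ ^ 2
        - ‖((w - τ • B w) - zw) - ((z - τ • B z) - z)‖ ^ 2
        = ‖w - z‖ ^ 2 - ‖w - zw‖ ^ 2
          - 2 * τ * ⟪B w - B z, w - z⟫ + 2 * τ * ⟪B w - B z, w - zw⟫ := by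
      simp only [← real_inner_self_eq_norm_sq, inner_sub_left, inner_sub_right, inner_add_left,
        inner_add_right, real_inner_smul_left, real_inner_smul_right, real_inner_comm]
      ring
    linarith
  -- three-point convexity identity / inequality
  have hC : ‖xp - z‖ ^ 2 ≤ (1 - α - β) * ‖w - z‖ ^ 2 + α * ‖zw - z‖ ^ 2 + β * ‖z‖ ^ 2
      - (1 - α - β) * α * ‖w - zw‖ ^ 2 := by
    have hid : ‖xp - z‖ ^ 2 = (1 - α - β) * ‖w - z‖ ^ 2 + α * ‖zw - z‖ ^ 2 + β * ‖z‖ ^ 2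
        - (1 - α - β) * α * ‖w - zw‖ ^ 2 - (1 - α - β) * β * ‖w‖ ^ 2 - α * β * ‖zw‖ ^ 2 := by
      rw [hxp]
      simp only [← real_inner_self_eq_norm_sq, inner_sub_left, inner_sub_right, inner_add_left,
        inner_add_right, real_inner_smul_left, real_inner_smul_right, real_inner_comm]
      ring
    have h1 : 0 ≤ (1 - α - β) * β * ‖w‖ ^ 2 :=
      mul_nonneg (mul_nonneg (by linarith) hβ.1.le) (sq_nonneg _)
    have h2 : 0 ≤ α * β * ‖zw‖ ^ 2 :=
      mul_nonneg (mul_nonneg hα.1.le hβ.1.le) (sq_nonneg _)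
    linarith
  -- expansion of the last norm term
  have hE : ‖B w - B z - (1 / (2 * γ)) • (w - zw)‖ ^ 2
      = ‖B w - B z‖ ^ 2 - (1 / γ) * ⟪B w - B z, w - zw⟫
        + (1 / (4 * γ ^ 2)) * ‖w - zw‖ ^ 2 := by
    simp only [← real_inner_self_eq_norm_sq, inner_sub_left, inner_sub_right,
      real_inner_smul_left, real_inner_smul_right, real_inner_comm]
    field_simp
    ring
  have hcanc : α * (τ / (2 * γ) - 2 + α + β) * ‖w - zw‖ ^ 2
      - 2 * γ * τ * α * (‖B w - B z‖ ^ 2 - (1 / γ) * ⟪B w - B z, w - zw⟫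
        + (1 / (4 * γ ^ 2)) * ‖w - zw‖ ^ 2)
      = α * (α + β - 2) * ‖w - zw‖ ^ 2 - 2 * γ * τ * α * ‖B w - B z‖ ^ 2
        + 2 * τ * α * ⟪B w - B z, w - zw⟫ := by
    field_simp
    ring
  have hA' := mul_le_mul_of_nonneg_left hA hα.1.le
  have h2τα : (0:ℝ) ≤ 2 * τ * α := by nlinarith [hτ.1, hα.1]
  have hB' := mul_le_mul_of_nonneg_left (hB w z) h2τα
  rw [← hD, hE]
  linarith [hC, hA', hB', hcanc]
end

section
/- Let H be a real Hilbert space, γ > 0, ε > 0, and B : H → H a γ-cocoercive operator. For each n ≥ 1 let J_n : H → H be firmly nonexpansive, τ_n ∈ (ε, 2γ − ε), θ_n ∈ [0,1], and α_n, β_n ∈ (0,1) with α_n + β_n ≤ 1. Let z ∈ H satisfy J_n(z − τ_n·B z) = z for all n. Given x_0, x_1 ∈ H, define for n ≥ 1: w_n = x_{n−1} + θ_n·(x_n − x_{n−1}) and x_{n+1} = (1 − α_n − β_n)·w_n + α_n·J_n(w_n − τ_n·B w_n). Then for every n, ‖x_n − z‖ ≤ max{‖x_0 − z‖, ‖x_1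 − z‖, ‖z‖}; in particular the sequences {x_n} and {w_n} are bounded. -/
open scoped RealInnerProductSpace

theorem stmt_11 {H : Type*} [NormedAddCommGroup H] [InnerProductSpace ℝ H] [CompleteSpace H]
    (γ ε : ℝ) (hγ : 0 < γ) (hε : 0 < ε)
    (B : H → H) (hB : ∀ x y : H, γ * ‖B x - B y‖ ^ 2 ≤ ⟪B x - B y, x - y⟫)
    (J : ℕ → H → H)
    (hJ : ∀ n, 1 ≤ n → ∀ u v : H,
      ‖J n u - J n v‖ ^ 2 ≤ ‖u - v‖ ^ 2 - ‖(u - J n u) - (v - J n v)‖ ^ 2)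
    (τ θ α β : ℕ → ℝ)
    (hτ : ∀ n, 1 ≤ n → τ n ∈ Set.Ioo ε (2 * γ - ε))
    (hθ : ∀ n, 1 ≤ n → θ n ∈ Set.Icc (0 : ℝ) 1)
    (hα : ∀ n, 1 ≤ n → α n ∈ Set.Ioo (0 : ℝ) 1)
    (hβ : ∀ n, 1 ≤ n → β n ∈ Set.Ioo (0 : ℝ) 1)
    (hαβ : ∀ n, 1 ≤ n → α n + β n ≤ 1)
    (z : H) (hz : ∀ n, 1 ≤ n → J n (z - τ n • B z) = z)
    (x w : ℕ → H)
    (hw : ∀ n, 1 ≤ n → w n = x (n - 1) + θ n • (x n - x (n - 1)))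
    (hx : ∀ n, 1 ≤ n →
      x (n + 1) = (1 - α n - β n) • w n + α n • J n (w n - τ n • B (w n))) :
    (∀ n, ‖x n - z‖ ≤ max (max ‖x 0 - z‖ ‖x 1 - z‖) ‖z‖) ∧
    ∃ M : ℝ, (∀ n, ‖x n‖ ≤ M) ∧ (∀ n, 1 ≤ n → ‖w n‖ ≤ M) := by
  set M0 : ℝ := max (max ‖x 0 - z‖ ‖x 1 - z‖) ‖z‖ with hM0
  have hzM0 : ‖z‖ ≤ M0 := le_max_right _ _
  -- key: quasi-nonexpansiveness of u ↦ J n (u - τ n • B u) around z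
  have key : ∀ n, 1 ≤ n → ∀ u : H, ‖J n (u - τ n • B u) - z‖ ≤ ‖u - z‖ := by
    intro n hn u
    obtain ⟨ht1, ht2⟩ := hτ n hn
    set t := τ n with htdef
    have htpos : 0 < t := hε.trans ht1
    have hnorm : ‖(u - t • B u) - (z - t • B z)‖ ^ 2 ≤ ‖u - z‖ ^ 2 := by
      have heq : (u - t • B u) - (z - t • B z) = (u - z) - t • (B u - B z) := by
        module
      rw [heq, norm_sub_sq_real, real_inner_smul_right, norm_smul,
        Real.norm_eq_abs, mul_pow, sq_abs]
      have hco := hB u z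
      have hcomm : ⟪u - z, B u - B z⟫ = ⟪B u - B z, u - z⟫ := real_inner_comm _ _
      nlinarith [sq_nonneg ‖B u - B z‖,
        mul_le_mul_of_nonneg_left hco htpos.le,
        mul_nonneg htpos.le (sq_nonneg ‖B u - B z‖)]
    have hfj := hJ n hn (u - t • B u) (z - t • B z)
    rw [hz n hn] at hfj
    have hsq : ‖J n (u - t • B u) - z‖ ^ 2 ≤ ‖u - z‖ ^ 2 := by
      nlinarith [sq_nonneg ‖(u - t • B u - J n (u - t • B u)) - (z - t • B z - z)‖]
    nlinarith [norm_nonneg (J n (u - t • B u) - z), norm_nonneg (u - z)]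
  -- bound on w n - z given bounds on x (n-1) - z and x n - z
  have wbound : ∀ n, 1 ≤ n → ‖x (n - 1) - z‖ ≤ M0 → ‖x n - z‖ ≤ M0 →
      ‖w n - z‖ ≤ M0 := by
    intro n hn h1 h2
    obtain ⟨hθ0, hθ1⟩ := hθ n hn
    have heq : w n - z = (1 - θ n) • (x (n - 1) - z) + θ n • (x n - z) := by
      rw [hw n hn]; module
    calc ‖w n - z‖ ≤ ‖(1 - θ n) • (x (n - 1) - z)‖ + ‖θ n • (x n - z)‖ := by
          rw [heq]; exact norm_add_le _ _
      _ = (1 - θ n) * ‖x (n - 1) - z‖ + θ n * ‖x n - z‖ := by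
          rw [norm_smul, norm_smul, Real.norm_eq_abs, Real.norm_eq_abs,
            abs_of_nonneg (by linarith), abs_of_nonneg hθ0]
      _ ≤ (1 - θ n) * M0 + θ n * M0 := by
          gcongr <;> linarith
      _ = M0 := by ring
  -- main induction
  have main : ∀ n, ‖x n - z‖ ≤ M0 := by
    intro n
    induction n using Nat.strong_induction_on with
    | _ n ih =>
      match n with
      | 0 => exact le_trans (le_max_left _ _) (le_max_left _ _)
      | 1 => exact le_trans (le_max_right _ _) (le_max_left _ _)
      | (m + 2) =>
        have hm1 : 1 ≤ m + 1 := Nat.le_add_left 1 m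
        have hwm : ‖w (m + 1) - z‖ ≤ M0 := by
          have := wbound (m + 1) hm1
          simp only [Nat.add_sub_cancel] at this
          exact this (ih m (by omega)) (ih (m + 1) (by omega))
        obtain ⟨hα0, hα1⟩ := hα (m + 1) hm1
        obtain ⟨hβ0, hβ1⟩ := hβ (m + 1) hm1
        have hab := hαβ (m + 1) hm1
        have hT : ‖J (m + 1) (w (m + 1) - τ (m + 1) • B (w (m + 1))) - z‖ ≤ M0 :=
          le_trans (key (m + 1) hm1 (w (m + 1))) hwm
        have heq : x (m + 2) - z
            = (1 - α (m + 1) - β (m + 1)) • (w (m + 1) - z)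
              + α (m + 1) • (J (m + 1) (w (m + 1) - τ (m + 1) • B (w (m + 1))) - z)
              + (- β (m + 1)) • z := by
          rw [hx (m + 1) hm1]; module
        calc ‖x (m + 2) - z‖
            ≤ ‖(1 - α (m + 1) - β (m + 1)) • (w (m + 1) - z)
                + α (m + 1) • (J (m + 1) (w (m + 1) - τ (m + 1) • B (w (m + 1))) - z)‖
              + ‖(- β (m + 1)) • z‖ := by rw [heq]; exact norm_add_le _ _
          _ ≤ ‖(1 - α (m + 1) - β (m + 1)) • (w (m + 1) - z)‖
              + ‖α (m + 1) • (J (m + 1) (w (m + 1) - τ (m + 1) • B (w (m + 1))) - z)‖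
              + ‖(- β (m + 1)) • z‖ := by gcongr; exact norm_add_le _ _
          _ = (1 - α (m + 1) - β (m + 1)) * ‖w (m + 1) - z‖
              + α (m + 1) * ‖J (m + 1) (w (m + 1) - τ (m + 1) • B (w (m + 1))) - z‖
              + β (m + 1) * ‖z‖ := by
              rw [norm_smul, norm_smul, norm_smul, Real.norm_eq_abs,
                Real.norm_eq_abs, Real.norm_eq_abs,
                abs_of_nonneg (by linarith), abs_of_nonneg hα0.le,
                abs_of_neg (by linarith)]
              ring
          _ ≤ (1 - α (m + 1) - β (m + 1)) * M0 + α (m + 1) * M0 + β (m + 1) * M0 := by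
              gcongr <;> linarith
          _ = M0 := by ring
  refine ⟨main, M0 + ‖z‖, fun n => ?_, fun n hn => ?_⟩
  · calc ‖x n‖ = ‖(x n - z) + z‖ := by rw [sub_add_cancel]
      _ ≤ ‖x n - z‖ + ‖z‖ := norm_add_le _ _
      _ ≤ M0 + ‖z‖ := by linarith [main n]
  · have hwn : ‖w n - z‖ ≤ M0 := wbound n hn (main (n - 1)) (main n)
    calc ‖w n‖ = ‖(w n - z) + z‖ := by rw [sub_add_cancel]
      _ ≤ ‖w n - z‖ + ‖z‖ := norm_add_le _ _
      _ ≤ M0 + ‖z‖ := by linarith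
end

section
/- Let H be a real Hilbert space, γ > 0, τ ∈ (0, 2γ), B : H → H a γ-cocoercive operator, and J : H → H a firmly nonexpansive map. Let z ∈ H satisfy J(z − τ·B z) = z. Let θ ∈ [0,1], α, β ∈ (0,1) with α + β ≤ 1, and x, x' ∈ H. Set w = x' + θ·(x − x'), z_w = J(w − τ·B w), and x⁺ = (1 − α − β)·w + α·z_w. Then ‖x⁺ − z‖² ≤ (1 − β)·[θ‖x − z‖² + (1 − θ)‖x' − z‖² − θ(1 − θ)‖x − x'‖²] − α(1 − α)(1 − β)²·‖z_w − w‖² + 2β·⟨α·(z_w − w) − z, x⁺ − z⟩. -/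
open scoped RealInnerProductSpace

lemma conv_sq {H : Type*} [NormedAddCommGroup H] [InnerProductSpace ℝ H] (t : ℝ) (u v : H) :
    ‖t • u + (1 - t) • v‖ ^ 2 = t * ‖u‖ ^ 2 + (1 - t) * ‖v‖ ^ 2 - t * (1 - t) * ‖u - v‖ ^ 2 := by
  have h1 := norm_add_sq_real (t • u) ((1 - t) • v)
  have h2 := norm_sub_sq_real u v
  have ha : ‖t • u‖ ^ 2 = t ^ 2 * ‖u‖ ^ 2 := by rw [norm_smul, mul_pow, Real.norm_eq_abs, sq_abs]
  have hb : ‖(1 - t) • v‖ ^ 2 = (1 - t) ^ 2 * ‖v‖ ^ 2 := by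
    rw [norm_smul, mul_pow, Real.norm_eq_abs, sq_abs]
  have hab : ⟪t • u, (1 - t) • v⟫ = t * (1 - t) * ⟪u, v⟫ := by
    rw [real_inner_smul_left, real_inner_smul_right]; ring
  rw [h1, ha, hb, hab, h2]; ring

theorem stmt_12 {H : Type*} [NormedAddCommGroup H] [InnerProductSpace ℝ H] [CompleteSpace H]
    (γ τ : ℝ) (hγ : 0 < γ) (hτ : τ ∈ Set.Ioo 0 (2 * γ))
    (B : H → H) (hB : ∀ x y : H, γ * ‖B x - B y‖ ^ 2 ≤ ⟪B x - B y, x - y⟫)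
    (J : H → H)
    (hJ : ∀ u v : H, ‖J u - J v‖ ^ 2 ≤ ‖u - v‖ ^ 2 - ‖(u - J u) - (v - J v)‖ ^ 2)
    (z : H) (hz : J (z - τ • B z) = z)
    (θ α β : ℝ) (hθ : θ ∈ Set.Icc (0 : ℝ) 1)
    (hα : α ∈ Set.Ioo (0 : ℝ) 1) (hβ : β ∈ Set.Ioo (0 : ℝ) 1) (hαβ : α + β ≤ 1)
    (x x' : H) (w zw xp : H)
    (hw : w = x' + θ • (x - x'))
    (hzw : zw = J (w - τ • B w))
    (hxp : xp = (1 - α - β) • w + α • zw) :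
    ‖xp - z‖ ^ 2 ≤
      (1 - β) * (θ * ‖x - z‖ ^ 2 + (1 - θ) * ‖x' - z‖ ^ 2 - θ * (1 - θ) * ‖x - x'‖ ^ 2)
      - α * (1 - α) * (1 - β) ^ 2 * ‖zw - w‖ ^ 2
      + 2 * β * ⟪α • (zw - w) - z, xp - z⟫ := by
  obtain ⟨hτ0, hτ2⟩ := hτ
  obtain ⟨hθ0, hθ1⟩ := hθ
  obtain ⟨hα0, hα1⟩ := hα
  obtain ⟨hβ0, hβ1⟩ := hβ
  -- Step 1 : ‖zw - z‖² ≤ ‖w - z‖²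
  have key1 : ‖zw - z‖ ^ 2 ≤ ‖w - z‖ ^ 2 := by
    have hJ' := hJ (w - τ • B w) (z - τ • B z)
    rw [hz, ← hzw] at hJ'
    have hexp : ‖(w - τ • B w) - (z - τ • B z)‖ ^ 2
        = ‖w - z‖ ^ 2 - 2 * τ * ⟪B w - B z, w - z⟫ + τ ^ 2 * ‖B w - B z‖ ^ 2 := by
      have : (w - τ • B w) - (z - τ • B z) = (w - z) - τ • (B w - B z) := by
        simp [smul_sub]; abel
      rw [this, norm_sub_sq_real, norm_smul, mul_pow, Real.norm_eq_abs, sq_abs,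
        real_inner_smul_right, real_inner_comm]
      ring
    have hBwz := hB w z
    nlinarith [sq_nonneg ‖(w - τ • B w - zw) - (z - τ • B z - z)‖,
      mul_nonneg hτ0.le (mul_nonneg (sub_nonneg.2 hτ2.le) (sq_nonneg ‖B w - B z‖))]
  -- convexity identity for ‖w - z‖²
  have hwz : ‖w - z‖ ^ 2 = θ * ‖x - z‖ ^ 2 + (1 - θ) * ‖x' - z‖ ^ 2
      - θ * (1 - θ) * ‖x - x'‖ ^ 2 := by
    have h := conv_sq θ (x - z) (x' - z)
    have he : w - z = θ • (x - z) + (1 - θ) • (x' - z) := by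
      rw [hw]; simp [smul_sub, sub_smul]; abel
    rw [he, h]
    congr 2
    abel
  -- v' = (1 - α) • w + α • zw
  set v' : H := α • zw + (1 - α) • w with hv'
  have hvz : ‖v' - z‖ ^ 2 = (1 - α) * ‖w - z‖ ^ 2 + α * ‖zw - z‖ ^ 2
      - α * (1 - α) * ‖zw - w‖ ^ 2 := by
    have h := conv_sq α (zw - z) (w - z)
    have he : v' - z = α • (zw - z) + (1 - α) • (w - z) := by
      rw [hv']; simp [smul_sub, sub_smul]; abel
    rw [he, h]
    have : zw - z - (w - z) = zw - w := by abel
    rw [this]; ring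
  -- decomposition: xp - z = (1-β)(v' - z) + β(α(zw-w) - z)
  set b : H := α • (zw - w) - z with hb
  have hdec : xp - z = (1 - β) • (v' - z) + β • b := by
    rw [hxp, hv', hb]
    module
  have hid : ‖xp - z‖ ^ 2 = (1 - β) ^ 2 * ‖v' - z‖ ^ 2 - β ^ 2 * ‖b‖ ^ 2
      + 2 * β * ⟪b, xp - z⟫ := by
    have h1 := norm_add_sq_real ((1 - β) • (v' - z)) (β • b)
    have ha : ‖(1 - β) • (v' - z)‖ ^ 2 = (1 - β) ^ 2 * ‖v' - z‖ ^ 2 := by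
      rw [norm_smul, mul_pow, Real.norm_eq_abs, sq_abs]
    have hbb : ‖β • b‖ ^ 2 = β ^ 2 * ‖b‖ ^ 2 := by
      rw [norm_smul, mul_pow, Real.norm_eq_abs, sq_abs]
    have hab : ⟪(1 - β) • (v' - z), β • b⟫ = (1 - β) * β * ⟪v' - z, b⟫ := by
      rw [real_inner_smul_left, real_inner_smul_right]; ring
    have hbc : ⟪b, xp - z⟫ = (1 - β) * ⟪v' - z, b⟫ + β * ‖b‖ ^ 2 := by
      rw [hdec, inner_add_right, real_inner_smul_right, real_inner_smul_right,
        real_inner_comm b (v' - z), real_inner_self_eq_norm_sq]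
    rw [hbc, hdec, h1, ha, hbb, hab]; ring
  have hβ2 : (1 - β) ^ 2 ≤ 1 - β := by nlinarith
  have hnn : (0:ℝ) ≤ ‖w - z‖ ^ 2 := sq_nonneg _
  have h3 : ‖v' - z‖ ^ 2 ≤ ‖w - z‖ ^ 2 - α * (1 - α) * ‖zw - w‖ ^ 2 := by
    nlinarith [mul_nonneg hα0.le (sub_nonneg.2 key1)]
  have h4 : (1 - β) ^ 2 * ‖v' - z‖ ^ 2
      ≤ (1 - β) ^ 2 * ‖w - z‖ ^ 2 - α * (1 - α) * (1 - β) ^ 2 * ‖zw - w‖ ^ 2 := by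
    calc (1 - β) ^ 2 * ‖v' - z‖ ^ 2
        ≤ (1 - β) ^ 2 * (‖w - z‖ ^ 2 - α * (1 - α) * ‖zw - w‖ ^ 2) :=
          mul_le_mul_of_nonneg_left h3 (sq_nonneg (1 - β))
      _ = (1 - β) ^ 2 * ‖w - z‖ ^ 2 - α * (1 - α) * (1 - β) ^ 2 * ‖zw - w‖ ^ 2 := by ring
  have h5 : (1 - β) ^ 2 * ‖w - z‖ ^ 2 ≤ (1 - β) * ‖w - z‖ ^ 2 :=
    mul_le_mul_of_nonneg_right hβ2 hnn
  have h6 : (0:ℝ) ≤ β ^ 2 * ‖b‖ ^ 2 := by positivity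
  rw [← hwz]
  linarith [hid, h4, h5, h6]
end

section
/- (Theorem 3.2, case III: θ_n ≡ 1.) Let H be a real Hilbert space, A : H → Set H a monotone set-valued operator, γ > 0, and B : H → H a γ-cocoercive operator. Assume the solution set Ω = {x ∈ H : 0 ∈ A x + B x} is nonempty and that the graph of A + B is sequentially weakly–strongly closed: whenever y_k converges weakly to ȳ and u_k ∈ A(y_k) + B(y_k) with ‖u_k‖ → 0, then 0 ∈ A(ȳ) + B(ȳ). Let ε > 0, and for each n ≥ 1 let τ_n ∈ (ε, 2γ − ε), let J_n : H → H be a resolvent of τ_n·A, and let α_n, β_n ∈ (0,1) with α_n + β_n ≤ 1, liminf_{n→∞} α_n > 0, limsup_{n→∞} α_n < 1, lim_{n→∞} β_n = 0 and ∑_{n=0}^∞ β_n = ∞. Given x_1 ∈ H, define for n ≥ 1: x_{n+1} = (1 − α_n − β_n)·x_n + α_n·J_n(x_n − τ_n·B x_n). Then {x_n} converges in norm to the point z ∈ Ω of minimal norm, i.e., the unique z ∈ Ω satisfying ⟨−z, q − z⟩ ≤ 0 for all q ∈ Ω. -/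
/-!
The zeros of `A + B` are the fixed points of each forward-backward map `Tₙ = Jₙ ∘ (I - τₙ B)`,
and cocoercivity makes `Tₙ` strongly quasi-nonexpansive:
`‖Tₙ p - z‖² + c ‖p - Tₙ p‖² ≤ ‖p - z‖²` with `c = ε / (2γ)`. Hence the zero set is closed and
convex, it has an element `z` of minimal norm, and `aₙ = ‖xₙ - z‖²` satisfies
`aₙ₊₁ ≤ (1 - βₙ) aₙ + βₙ bₙ` with `bₙ = 2⟪-z, xₙ₊₁ - z⟫`. By Maingé's lemma it suffices that
`limsup bₙ ≤ 0` along every subsequence on which `a` does not decrease in the limit. On such a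
subsequence the residuals `‖xₙ - Tₙ xₙ‖` tend to `0`, so by the weak–strong closedness of the graph
every weak cluster point `w` is a zero, and `⟪-z, w - z⟫ ≤ 0` by minimality of `z`.
-/

open Filter Topology Function
open scoped RealInnerProductSpace

section InnerProductSpace

variable {H : Type*} [NormedAddCommGroup H] [InnerProductSpace ℝ H]

theorem norm_smul_add_smul_sq {a b : ℝ} (hab : a + b = 1) (u v : H) :
    ‖a • u + b • v‖ ^ 2 = a * ‖u‖ ^ 2 + b * ‖v‖ ^ 2 - a * b * ‖u - v‖ ^ 2 := by
  rw [norm_add_sq_real, norm_sub_sq_real, norm_smul, norm_smul, real_inner_smul_left,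
    real_inner_smul_right, mul_pow, mul_pow, Real.norm_eq_abs, Real.norm_eq_abs, sq_abs, sq_abs,
    eq_sub_of_add_eq hab]
  ring

theorem norm_smul_add_smul_sq_le {a b : ℝ} (ha : 0 ≤ a) (hb : 0 ≤ b) (u v : H) :
    ‖a • u + b • v‖ ^ 2 ≤ (a + b) * (a * ‖u‖ ^ 2 + b * ‖v‖ ^ 2) := by
  rw [norm_add_sq_real, norm_smul_of_nonneg ha, norm_smul_of_nonneg hb, real_inner_smul_left,
    real_inner_smul_right]
  nlinarith [mul_le_mul_of_nonneg_left (real_inner_le_norm u v) (mul_nonneg ha hb),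
    mul_nonneg (mul_nonneg ha hb) (sq_nonneg (‖u‖ - ‖v‖))]

theorem exists_mem_forall_inner_neg_sub_nonpos [CompleteSpace H] {s : Set H} (hne : s.Nonempty)
    (hs : IsClosed s) (hconv : Convex ℝ s) : ∃ z ∈ s, ∀ q ∈ s, ⟪-z, q - z⟫ ≤ 0 := by
  obtain ⟨z, hz, hmin⟩ := exists_norm_eq_iInf_of_complete_convex hne hs.isComplete hconv 0
  refine ⟨z, hz, fun q hq => ?_⟩
  simpa using (norm_eq_iInf_iff_real_inner_le_zero hconv hz).mp hmin q hq

end InnerProductSpace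

section QuasiNonexpansive

variable {E : Type*} [NormedAddCommGroup E]
  {H : Type*} [NormedAddCommGroup H] [InnerProductSpace ℝ H]

def IsQuasiNonexpansive (T : E → E) : Prop :=
  ∀ p, ∀ z ∈ fixedPoints T, ‖T p - z‖ ≤ ‖p - z‖

theorem IsQuasiNonexpansive.isClosed_fixedPoints {T : E → E}
    (hT : IsQuasiNonexpansive T) : IsClosed (fixedPoints T) := by
  refine isClosed_of_closure_subset fun y hy => eq_of_forall_dist_le fun δ hδ => ?_
  obtain ⟨q, hq, hyq⟩ := Metric.mem_closure_iff.mp hy (δ / 2) (half_pos hδ)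
  calc dist (T y) y ≤ dist (T y) q + dist q y := dist_triangle _ _ _
    _ ≤ ‖y - q‖ + ‖y - q‖ := by
        rw [dist_eq_norm, dist_eq_norm, norm_sub_rev q y]
        exact add_le_add_left (hT y q hq) _
    _ ≤ δ := by rw [← dist_eq_norm]; linarith

theorem IsQuasiNonexpansive.convex_fixedPoints {T : H → H} (hT : IsQuasiNonexpansive T) :
    Convex ℝ (fixedPoints T) := by
  intro p hp q hq a b ha hb hab
  set y := a • p + b • q
  have hcomb : ∀ w, a • (w - p) + b • (w - q) = w - y := fun w => calc
    a • (w - p) + b • (w - q) = (a + b) • w - y := by simp only [y]; module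
    _ = w - y := by rw [hab, one_smul]
  have h : ‖T y - y‖ ^ 2 ≤ 0 := calc
    ‖T y - y‖ ^ 2 = a * ‖T y - p‖ ^ 2 + b * ‖T y - q‖ ^ 2 - a * b * ‖q - p‖ ^ 2 := by
        rw [← hcomb, norm_smul_add_smul_sq hab, sub_sub_sub_cancel_left]
    _ ≤ a * ‖y - p‖ ^ 2 + b * ‖y - q‖ ^ 2 - a * b * ‖q - p‖ ^ 2 := by
        have hp' := pow_le_pow_left₀ (norm_nonneg _) (hT y p hp) 2
        have hq' := pow_le_pow_left₀ (norm_nonneg _) (hT y q hq) 2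
        nlinarith
    _ = 0 := by
        rw [← sub_sub_sub_cancel_left p q y, ← norm_smul_add_smul_sq hab, hcomb, sub_self,
          norm_zero]
        ring
  exact sub_eq_zero.mp (norm_eq_zero.mp (pow_eq_zero_iff two_ne_zero |>.mp
    (le_antisymm h (sq_nonneg _))))

end QuasiNonexpansive

section Operators

variable {H : Type*} [NormedAddCommGroup H] [InnerProductSpace ℝ H]

def IsMonotoneOperator (A : H → Set H) : Prop :=
  ∀ x y u v, u ∈ A x → v ∈ A y → 0 ≤ ⟪u - v, x - y⟫

def IsCocoercive (γ : ℝ) (B : H → H) : Prop :=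
  ∀ x y, γ * ‖B x - B y‖ ^ 2 ≤ ⟪B x - B y, x - y⟫

def IsResolvent (A : H → Set H) (τ : ℝ) (J : H → H) : Prop :=
  ∀ y, (1 / τ) • (y - J y) ∈ A (J y)

def forwardBackward (J B : H → H) (τ : ℝ) (p : H) : H :=
  J (p - τ • B p)

variable {A : H → Set H} {B J : H → H} {γ τ : ℝ}

theorem IsCocoercive.mul_norm_sub_le (hB : IsCocoercive γ B) (x y : H) :
    γ * ‖B x - B y‖ ≤ ‖x - y‖ := by
  rcases (norm_nonneg (B x - B y)).eq_or_lt with h | h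
  · rw [← h, mul_zero]
    exact norm_nonneg _
  · refine le_of_mul_le_mul_right ?_ h
    calc γ * ‖B x - B y‖ * ‖B x - B y‖ = γ * ‖B x - B y‖ ^ 2 := by ring
      _ ≤ ⟪B x - B y, x - y⟫ := hB x y
      _ ≤ ‖B x - B y‖ * ‖x - y‖ := real_inner_le_norm _ _
      _ = ‖x - y‖ * ‖B x - B y‖ := mul_comm _ _

theorem one_div_smul_sub_smul_sub (hτ : τ ≠ 0) (p w b : H) :
    (1 / τ) • ((p - τ • b) - w) = (1 / τ) • (p - w) - b := by
  rw [sub_right_comm, smul_sub _ (p - w), smul_smul, one_div_mul_cancel hτ, one_smul]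

theorem IsResolvent.norm_sub_sq_le_inner (hA : IsMonotoneOperator A) (hτ : 0 < τ)
    (hJ : IsResolvent A τ J) (u v : H) : ‖J u - J v‖ ^ 2 ≤ ⟪u - v, J u - J v⟫ := by
  have h := hA _ _ _ _ (hJ u) (hJ v)
  rw [← smul_sub, real_inner_smul_left] at h
  have h' := (mul_nonneg_iff_of_pos_left (one_div_pos.mpr hτ)).mp h
  rw [show u - J u - (v - J v) = (u - v) - (J u - J v) by abel, inner_sub_left,
    real_inner_self_eq_norm_sq] at h'
  linarith

theorem forwardBackward_estimate (hA : IsMonotoneOperator A) (hτ : 0 < τ) (hJ : IsResolvent A τ J)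
    (hγ : 0 ≤ γ) (hB : IsCocoercive γ B) (p q : H) :
    2 * γ * ‖forwardBackward J B τ p - forwardBackward J B τ q‖ ^ 2
      + (2 * γ - τ) * ‖(p - q) - (forwardBackward J B τ p - forwardBackward J B τ q)‖ ^ 2
      ≤ 2 * γ * ‖p - q‖ ^ 2 := by
  set e := forwardBackward J B τ p - forwardBackward J B τ q
  set d := p - q
  set g := B p - B q
  have hfirm : ‖e‖ ^ 2 ≤ ⟪d, e⟫ - τ * ⟪g, e⟫ := by
    have h := hJ.norm_sub_sq_le_inner hA hτ (p - τ • B p) (q - τ • B q)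
    rwa [show p - τ • B p - (q - τ • B q) = d - τ • g by simp only [d, g, smul_sub]; abel,
      inner_sub_left, real_inner_smul_left] at h
  have hsplit : ⟪g, e⟫ = ⟪g, d⟫ - ⟪g, d - e⟫ := by rw [inner_sub_right g d e]; ring
  have hpar : ‖d - e‖ ^ 2 = ‖d‖ ^ 2 - 2 * ⟪d, e⟫ + ‖e‖ ^ 2 := norm_sub_sq_real d e
  have hCS : ⟪g, d - e⟫ ≤ ‖g‖ * ‖d - e‖ := real_inner_le_norm _ _
  have hL : ‖e‖ ^ 2 + ‖d - e‖ ^ 2 ≤ ‖d‖ ^ 2 - 2 * τ * γ * ‖g‖ ^ 2 + 2 * τ * (‖g‖ * ‖d - e‖) := by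
    nlinarith [mul_le_mul_of_nonneg_left (hB p q) hτ.le, mul_le_mul_of_nonneg_left hCS hτ.le]
  -- AM-GM: `4 τ γ ‖g‖ ‖d - e‖ ≤ 4 τ γ² ‖g‖² + τ ‖d - e‖²`
  nlinarith [mul_le_mul_of_nonneg_left hL (by positivity : (0 : ℝ) ≤ 2 * γ),
    mul_nonneg hτ.le (sq_nonneg (2 * γ * ‖g‖ - ‖d - e‖))]

theorem forwardBackward_eq_self_iff (hA : IsMonotoneOperator A) (hτ : 0 < τ)
    (hJ : IsResolvent A τ J) {z : H} : forwardBackward J B τ z = z ↔ -B z ∈ A z := by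
  have hres : (1 / τ) • (z - forwardBackward J B τ z) - B z ∈ A (forwardBackward J B τ z) := by
    rw [← one_div_smul_sub_smul_sub hτ.ne']
    exact hJ _
  constructor
  · intro hz
    rwa [hz, sub_self, smul_zero, zero_sub] at hres
  · intro hz
    have h := hA _ _ _ _ hres hz
    rw [sub_neg_eq_add, sub_add_cancel, real_inner_smul_left, ← neg_sub z (forwardBackward J B τ z),
      inner_neg_right, real_inner_self_eq_norm_sq] at h
    have h' : ‖z - forwardBackward J B τ z‖ ^ 2 ≤ 0 := by nlinarith [one_div_pos.mpr hτ]
    rw [← sub_eq_zero, ← norm_eq_zero, ← sq_eq_zero_iff, ← neg_sub, norm_neg]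
    exact le_antisymm h' (sq_nonneg _)

theorem forwardBackward_sq_norm_sub_le {ε : ℝ} (hA : IsMonotoneOperator A) (hτ : 0 < τ)
    (hJ : IsResolvent A τ J) (hγ : 0 < γ) (hB : IsCocoercive γ B) (hτε : τ ≤ 2 * γ - ε)
    {z : H} (hz : -B z ∈ A z) (p : H) :
    ‖forwardBackward J B τ p - z‖ ^ 2 + ε / (2 * γ) * ‖p - forwardBackward J B τ p‖ ^ 2
      ≤ ‖p - z‖ ^ 2 := by
  have h := forwardBackward_estimate hA hτ hJ hγ.le hB p z
  rw [(forwardBackward_eq_self_iff hA hτ hJ).mpr hz, sub_sub_sub_cancel_right] at h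
  refine le_of_mul_le_mul_left ?_ (by positivity : (0 : ℝ) < 2 * γ)
  have hε : 2 * γ * (ε / (2 * γ)) = ε := by field_simp
  rw [mul_add, ← mul_assoc, hε]
  nlinarith [mul_le_mul_of_nonneg_right (show ε ≤ 2 * γ - τ by linarith)
    (sq_nonneg ‖p - forwardBackward J B τ p‖)]

theorem zeros_eq_fixedPoints_forwardBackward (hA : IsMonotoneOperator A) (hτ : 0 < τ)
    (hJ : IsResolvent A τ J) : {z | -B z ∈ A z} = fixedPoints (forwardBackward J B τ) :=
  Set.ext fun _ => (forwardBackward_eq_self_iff hA hτ hJ).symm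

theorem isQuasiNonexpansive_forwardBackward (hA : IsMonotoneOperator A) (hτ : 0 < τ)
    (hJ : IsResolvent A τ J) (hγ : 0 < γ) (hB : IsCocoercive γ B) (hτγ : τ ≤ 2 * γ) :
    IsQuasiNonexpansive (forwardBackward J B τ) := fun p z hz => by
  rw [← zeros_eq_fixedPoints_forwardBackward hA hτ hJ] at hz
  have h := forwardBackward_sq_norm_sub_le (ε := 0) hA hτ hJ hγ hB (by linarith) hz p
  rw [zero_div, zero_mul, add_zero] at h
  exact (pow_le_pow_iff_left₀ (norm_nonneg _) (norm_nonneg _) two_ne_zero).mp h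

end Operators

section LimsupNonpos

/-- `limsup f ≤ 0`, phrased so that no boundedness of `f` is needed (for an unbounded real
sequence `Filter.limsup` takes a junk value). -/
def LimsupNonpos (f : ℕ → ℝ) : Prop :=
  ∀ η > 0, ∀ᶠ n in atTop, f n < η

variable {f g : ℕ → ℝ}

theorem Filter.Tendsto.limsupNonpos (hf : Tendsto f atTop (𝓝 0)) : LimsupNonpos f :=
  fun _ hη => hf.eventually (eventually_lt_nhds hη)

theorem LimsupNonpos.mono (hf : LimsupNonpos f) (h : ∀ᶠ n in atTop, g n ≤ f n) :
    LimsupNonpos g :=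
  fun η hη => (hf η hη).mp (h.mono fun _ hle hlt => hle.trans_lt hlt)

theorem LimsupNonpos.add_tendsto_zero (hf : LimsupNonpos f) (hg : Tendsto g atTop (𝓝 0)) :
    LimsupNonpos fun n => f n + g n := fun η hη => by
  filter_upwards [hf (η / 2) (half_pos hη), hg.limsupNonpos (η / 2) (half_pos hη)] with n h1 h2
  linarith

theorem LimsupNonpos.const_mul (hf : LimsupNonpos f) {c : ℝ} (hc : 0 ≤ c) :
    LimsupNonpos fun n => c * f n := fun η hη => by
  filter_upwards [hf (η / (c + 1)) (by positivity)] with n hn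
  have : c * f n ≤ c * (η / (c + 1)) := mul_le_mul_of_nonneg_left hn.le hc
  have : c * (η / (c + 1)) < η := by
    rw [mul_div_assoc', div_lt_iff₀ (by positivity)]
    nlinarith
  linarith

theorem LimsupNonpos.tendsto_zero (hf : LimsupNonpos f) (h0 : ∀ n, 0 ≤ f n) :
    Tendsto f atTop (𝓝 0) := by
  rw [Metric.tendsto_atTop]
  intro η hη
  obtain ⟨N, hN⟩ := eventually_atTop.mp (hf η hη)
  exact ⟨N, fun n hn => by rw [Real.dist_eq, sub_zero, abs_of_nonneg (h0 n)]; exact hN n hn⟩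

end LimsupNonpos

section RealSequences

variable {a b β : ℕ → ℝ}

/- Above the threshold `N` the excess `max (a n - η / 2) 0` is multiplied at each step by at most
`1 - β n ≤ exp (-β n)`, and `∑ β n = ∞`. -/
theorem tendsto_zero_of_xu (ha : ∀ n, 0 ≤ a n) (hβ : ∀ n, 0 ≤ β n) (hβ1 : ∀ n, β n ≤ 1)
    (hβsum : ¬ Summable β) (hrec : ∀ n, a (n + 1) ≤ (1 - β n) * a n + β n * b n)
    (hb : LimsupNonpos b) : Tendsto a atTop (𝓝 0) := by
  refine LimsupNonpos.tendsto_zero (fun η hη => ?_) ha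
  obtain ⟨N, hN⟩ := eventually_atTop.mp (hb (η / 2) (half_pos hη))
  set e : ℕ → ℝ := fun n => max (a n - η / 2) 0
  set S : ℕ → ℝ := fun n => ∑ i ∈ Finset.range n, β i
  have hstep : ∀ n ≥ N, e (n + 1) ≤ Real.exp (-β n) * e n := fun n hn => by
    have h1 : a (n + 1) - η / 2 ≤ (1 - β n) * (a n - η / 2) := by
      nlinarith [hrec n, hN n hn, hβ n]
    have h2 : (1 - β n) * (a n - η / 2) ≤ (1 - β n) * e n :=
      mul_le_mul_of_nonneg_left (le_max_left _ _) (by linarith [hβ1 n])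
    have h3 : (1 - β n) * e n ≤ Real.exp (-β n) * e n :=
      mul_le_mul_of_nonneg_right (by linarith [Real.add_one_le_exp (-β n)]) (le_max_right _ _)
    exact max_le (by linarith) ((mul_nonneg (by linarith [hβ1 n]) (le_max_right _ _)).trans h3)
  have hdecay : ∀ n ≥ N, e n * Real.exp (S n) ≤ e N * Real.exp (S N) := by
    intro n hn
    induction n, hn using Nat.le_induction with
    | base => exact le_rfl
    | succ n hn ih =>
      calc e (n + 1) * Real.exp (S (n + 1))
          ≤ Real.exp (-β n) * e n * Real.exp (S n + β n) := by
            rw [show S (n + 1) = S n + β n from Finset.sum_range_succ _ _]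
            exact mul_le_mul_of_nonneg_right (hstep n hn) (Real.exp_nonneg _)
        _ = e n * Real.exp (S n) * (Real.exp (-β n) * Real.exp (β n)) := by
            rw [Real.exp_add]; ring
        _ = e n * Real.exp (S n) := by rw [← Real.exp_add, neg_add_cancel, Real.exp_zero, mul_one]
        _ ≤ e N * Real.exp (S N) := ih
  have hS : Tendsto (fun n => e N * Real.exp (S N) * Real.exp (-S n)) atTop (𝓝 0) := by
    have := Real.tendsto_exp_neg_atTop_nhds_zero.comp
      ((not_summable_iff_tendsto_nat_atTop_of_nonneg hβ).mp hβsum)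
    simpa using this.const_mul (e N * Real.exp (S N))
  filter_upwards [hS.limsupNonpos (η / 2) (half_pos hη), eventually_ge_atTop N] with n h1 h2
  have : e n ≤ e N * Real.exp (S N) * Real.exp (-S n) := by
    rw [Real.exp_neg, ← div_eq_mul_inv, le_div_iff₀ (Real.exp_pos _)]
    exact hdecay n h2
  linarith [le_max_left (a n - η / 2) 0]

theorem limsupNonpos_sub_succ_of_eventually_antitone (ha : ∀ n, 0 ≤ a n)
    (h : ∀ᶠ n in atTop, a (n + 1) ≤ a n) : LimsupNonpos fun n => a n - a (n + 1) := by
  obtain ⟨N, hN⟩ := eventually_atTop.mp h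
  have hconv := tendsto_atTop_ciInf (antitone_add_nat_of_succ_le hN)
    ⟨0, by rintro _ ⟨n, rfl⟩; exact ha _⟩
  have hlim := (tendsto_add_atTop_iff_nat N).mp hconv
  refine Filter.Tendsto.limsupNonpos ?_
  simpa using hlim.sub ((tendsto_add_atTop_iff_nat 1).mpr hlim)

theorem tendsto_zero_of_mainge_of_frequently (ha : ∀ n, 0 ≤ a n) (hβ : ∀ n, 0 < β n)
    (hβ1 : ∀ n, β n ≤ 1) (hrec : ∀ n, a (n + 1) ≤ (1 - β n) * a n + β n * b n)
    (hcrit : ∀ ψ : ℕ → ℕ, Tendsto ψ atTop atTop →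
      LimsupNonpos (fun n => a (ψ n) - a (ψ n + 1)) → LimsupNonpos fun n => b (ψ n))
    (hfreq : ∃ᶠ n in atTop, a n < a (n + 1)) : Tendsto a atTop (𝓝 0) := by
  classical
  obtain ⟨N, hN⟩ := hfreq.exists
  set ψ : ℕ → ℕ := fun n => Nat.findGreatest (fun k => a k < a (k + 1)) (n + N)
  have hψinc : ∀ n, a (ψ n) < a (ψ n + 1) :=
    fun n => Nat.findGreatest_spec (P := fun k => a k < a (k + 1)) (Nat.le_add_left N n) hN
  have hψtop : Tendsto ψ atTop atTop := by
    refine tendsto_atTop.mpr fun K => ?_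
    obtain ⟨m, hKm, hm⟩ := frequently_atTop.mp hfreq K
    filter_upwards [eventually_ge_atTop m] with n hn
    exact hKm.trans (Nat.le_findGreatest (by omega) hm)
  -- an increase at `k` forces `a k < b k`, hence `a (k + 1) ≤ b k`
  have hψb : ∀ n, a (ψ n + 1) ≤ b (ψ n) := fun n => by
    have hab : a (ψ n) < b (ψ n) := by nlinarith [hrec (ψ n), hψinc n, hβ (ψ n)]
    nlinarith [hrec (ψ n), hβ1 (ψ n)]
  have htail : ∀ n, a (n + N) ≤ a (ψ n + 1) := fun n => by
    rcases (Nat.findGreatest_le (n + N) : ψ n ≤ n + N).eq_or_lt with h | h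
    · rw [← h]
      exact (hψinc n).le
    · have hdec : ∀ k, ψ n + 1 ≤ k → k ≤ n + N → a k ≤ a (ψ n + 1) := by
        intro k hk
        induction k, hk using Nat.le_induction with
        | base => exact fun _ => le_rfl
        | succ k hk ih =>
          intro hkN
          have : ¬ a k < a (k + 1) :=
            Nat.findGreatest_is_greatest (P := fun k => a k < a (k + 1)) (Nat.lt_of_succ_le hk)
              (by omega)
          exact (not_lt.mp this).trans (ih (by omega))
      exact hdec _ h le_rfl
  have hb := hcrit ψ hψtop fun η hη => Eventually.of_forall fun n => by linarith [hψinc n]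
  exact (tendsto_add_atTop_iff_nat N).mp <|
    (hb.mono (Eventually.of_forall fun n => (htail n).trans (hψb n))).tendsto_zero fun n => ha _

/- Maingé's lemma: either `a` is eventually nonincreasing and Xu's lemma applies, or one follows
the last increase of `a` before each time `n`. -/
theorem tendsto_zero_of_mainge (ha : ∀ n, 0 ≤ a n) (hβ : ∀ n, 0 < β n) (hβ1 : ∀ n, β n ≤ 1)
    (hβsum : ¬ Summable β) (hrec : ∀ n, a (n + 1) ≤ (1 - β n) * a n + β n * b n)
    (hcrit : ∀ ψ : ℕ → ℕ, Tendsto ψ atTop atTop →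
      LimsupNonpos (fun n => a (ψ n) - a (ψ n + 1)) → LimsupNonpos fun n => b (ψ n)) :
    Tendsto a atTop (𝓝 0) := by
  by_cases hfreq : ∃ᶠ n in atTop, a n < a (n + 1)
  · exact tendsto_zero_of_mainge_of_frequently ha hβ hβ1 hrec hcrit hfreq
  · have hev : ∀ᶠ n in atTop, a (n + 1) ≤ a n := by
      simpa only [not_frequently, not_lt] using hfreq
    exact tendsto_zero_of_xu ha (fun n => (hβ n).le) hβ1 hβsum hrec
      (hcrit id tendsto_id (limsupNonpos_sub_succ_of_eventually_antitone ha hev))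

end RealSequences

section Weak

variable {H : Type*} [NormedAddCommGroup H] [InnerProductSpace ℝ H]

def WeakTendsto (y : ℕ → H) (w : H) : Prop :=
  ∀ v : H, Tendsto (fun k => ⟪y k, v⟫) atTop (𝓝 ⟪w, v⟫)

theorem WeakTendsto.of_tendsto_norm_sub {y y' : ℕ → H} {w : H} (hy : WeakTendsto y w)
    (h : Tendsto (fun k => ‖y k - y' k‖) atTop (𝓝 0)) : WeakTendsto y' w := by
  intro v
  have hsmall : Tendsto (fun k => ⟪y k - y' k, v⟫) atTop (𝓝 0) :=
    squeeze_zero_norm (fun k => (norm_inner_le_norm _ _))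
      (by simpa using h.mul_const ‖v‖)
  simpa [inner_sub_left] using (hy v).sub hsmall

/- Sequential Banach–Alaoglu applies in the closed span of the sequence, which is separable and
identified with its dual by the Riesz map. -/
theorem exists_weakTendsto_subseq [CompleteSpace H] {x : ℕ → H} {M : ℝ} (hM : ∀ k, ‖x k‖ ≤ M) :
    ∃ (w : H) (φ : ℕ → ℕ), StrictMono φ ∧ WeakTendsto (x ∘ φ) w := by
  set S : Submodule ℝ H := (Submodule.span ℝ (Set.range x)).topologicalClosure
  have hxS : ∀ k, x k ∈ S :=
    fun k => Submodule.le_topologicalClosure _ (Submodule.subset_span ⟨k, rfl⟩)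
  have : TopologicalSpace.SeparableSpace S :=
    ((Set.countable_range x).isSeparable.span (R := ℝ)).closure.separableSpace
  set f : ℕ → WeakDual ℝ S :=
    fun k => StrongDual.toWeakDual (InnerProductSpace.toDual ℝ S ⟨x k, hxS k⟩)
  have hf : ∀ k, f k ∈ WeakDual.toStrongDual ⁻¹' Metric.closedBall 0 M := fun k => by
    show dist _ _ ≤ M
    rw [StrongDual.toStrongDual_toWeakDual]
    refine (dist_zero_right (InnerProductSpace.toDual ℝ S ⟨x k, hxS k⟩)).trans_le ?_
    rw [LinearIsometryEquiv.norm_map]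
    exact hM k
  obtain ⟨g, -, φ, hφ, hg⟩ := WeakDual.isSeqCompact_closedBall ℝ S 0 M hf
  refine ⟨((InnerProductSpace.toDual ℝ S).symm (WeakDual.toStrongDual g) : H), φ, hφ, fun v => ?_⟩
  convert ((WeakDual.eval_continuous (S.orthogonalProjectionOnto v)).tendsto g).comp hg using 1
  · funext k
    simp [f, InnerProductSpace.toDual_apply_apply]
  · rw [← Submodule.inner_orthogonalProjectionOnto_eq_of_mem_left,
      InnerProductSpace.toDual_symm_apply]
    rfl

theorem limsupNonpos_inner_sub_of_weak_cluster [CompleteSpace H] {y : ℕ → H} {M : ℝ}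
    (hy : ∀ n, ‖y n‖ ≤ M) (v : H) (c : ℝ)
    (h : ∀ (φ : ℕ → ℕ) (w : H), StrictMono φ → WeakTendsto (y ∘ φ) w → ⟪v, w⟫ ≤ c) :
    LimsupNonpos fun n => ⟪v, y n⟫ - c := by
  intro η hη
  by_contra hne
  obtain ⟨θ, hθ, hθη⟩ := extraction_of_frequently_atTop
    ((not_eventually.mp hne).mono fun n hn => not_lt.mp hn)
  obtain ⟨w, φ, hφ, hw⟩ := exists_weakTendsto_subseq fun k => hy (θ k)
  have hlim : Tendsto (fun k => ⟪v, y (θ (φ k))⟫ - c) atTop (𝓝 (⟪v, w⟫ - c)) := by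
    simpa only [real_inner_comm v, Function.comp_apply] using (hw v).sub_const c
  linarith [ge_of_tendsto' hlim fun k => hθη (φ k), h (θ ∘ φ) w (hθ.comp hφ) hw]

theorem neg_mem_of_weakTendsto_of_residual_tendsto_zero {A : H → Set H} {B : H → H} {γ ε : ℝ}
    (hγ : 0 < γ) (hB : IsCocoercive γ B) (hε : 0 < ε)
    (hclosed : ∀ (y u : ℕ → H) (ybar : H), WeakTendsto y ybar →
      (∀ k, ∃ a ∈ A (y k), u k = a + B (y k)) → Tendsto (fun k => ‖u k‖) atTop (𝓝 0) →
      -B ybar ∈ A ybar)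
    {τ : ℕ → ℝ} (hτ : ∀ k, ε ≤ τ k) {J : ℕ → H → H} (hJ : ∀ k, IsResolvent A (τ k) (J k))
    {p : ℕ → H} {w : H} (hp : WeakTendsto p w)
    (hr : Tendsto (fun k => ‖p k - forwardBackward (J k) B (τ k) (p k)‖) atTop (𝓝 0)) :
    -B w ∈ A w := by
  set t := fun k => forwardBackward (J k) B (τ k) (p k)
  have hτ0 : ∀ k, 0 < τ k := fun k => hε.trans_le (hτ k)
  refine hclosed t (fun k => (1 / τ k) • (p k - t k) - B (p k) + B (t k)) w
    (hp.of_tendsto_norm_sub hr) (fun k => ⟨_, ?_, rfl⟩) ?_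
  · rw [← one_div_smul_sub_smul_sub (hτ0 k).ne']
    exact hJ k _
  refine squeeze_zero (fun k => norm_nonneg _) (fun k => ?_)
    (by simpa only [mul_zero] using hr.const_mul (1 / ε + 1 / γ))
  have hBk : ‖B (t k) - B (p k)‖ ≤ 1 / γ * ‖p k - t k‖ := by
    rw [one_div_mul_eq_div, le_div_iff₀ hγ, norm_sub_rev (p k), mul_comm]
    exact hB.mul_norm_sub_le _ _
  have hτk : ‖(1 / τ k) • (p k - t k)‖ ≤ 1 / ε * ‖p k - t k‖ := by
    rw [norm_smul_of_nonneg (one_div_pos.mpr (hτ0 k)).le]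
    exact mul_le_mul_of_nonneg_right (one_div_le_one_div_of_le hε (hτ k)) (norm_nonneg _)
  calc ‖(1 / τ k) • (p k - t k) - B (p k) + B (t k)‖
      = ‖(1 / τ k) • (p k - t k) + (B (t k) - B (p k))‖ := by congr 1; abel
    _ ≤ ‖(1 / τ k) • (p k - t k)‖ + ‖B (t k) - B (p k)‖ := norm_add_le _ _
    _ ≤ (1 / ε + 1 / γ) * ‖p k - t k‖ := by rw [add_mul]; exact add_le_add hτk hBk

end Weak

section DampedMann

variable {H : Type*} [NormedAddCommGroup H] [InnerProductSpace ℝ H]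

section Step

variable {p t z x' : H} {α β c : ℝ}

theorem norm_step_sub_le (hα : 0 ≤ α) (hβ : 0 ≤ β) (hαβ : α + β ≤ 1) (ht : ‖t - z‖ ≤ ‖p - z‖) :
    ‖(1 - α - β) • p + α • t - z‖ ≤ (1 - β) * ‖p - z‖ + β * ‖z‖ := by
  rw [show (1 - α - β) • p + α • t - z = ((1 - α - β) • (p - z) + α • (t - z)) - β • z by module]
  calc _ ≤ ‖(1 - α - β) • (p - z)‖ + ‖α • (t - z)‖ + ‖β • z‖ :=
        (norm_sub_le _ _).trans (add_le_add_left (norm_add_le _ _) _)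
    _ = (1 - α - β) * ‖p - z‖ + α * ‖t - z‖ + β * ‖z‖ := by
        rw [norm_smul_of_nonneg (by linarith), norm_smul_of_nonneg hα, norm_smul_of_nonneg hβ]
    _ ≤ (1 - β) * ‖p - z‖ + β * ‖z‖ := by nlinarith

theorem norm_step_sub_self_le (hα : 0 ≤ α) (hα1 : α ≤ 1) (hβ : 0 ≤ β) :
    ‖(1 - α - β) • p + α • t - p‖ ≤ ‖p - t‖ + β * ‖p‖ := by
  rw [show (1 - α - β) • p + α • t - p = α • (t - p) - β • p by module]
  calc _ ≤ ‖α • (t - p)‖ + ‖β • p‖ := norm_sub_le _ _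
    _ = α * ‖p - t‖ + β * ‖p‖ := by
        rw [norm_smul_of_nonneg hα, norm_smul_of_nonneg hβ, norm_sub_rev]
    _ ≤ ‖p - t‖ + β * ‖p‖ := by nlinarith [norm_nonneg (p - t)]

/- Here `‖u + e‖² ≤ ‖u‖² + 2⟪e, u + e⟫` with `e = -β z` produces the term `β (2 ⟪-z, x' - z⟫)`. -/
theorem sq_norm_step_sub_le (hα : 0 ≤ α) (hβ : 0 ≤ β) (hαβ : α + β ≤ 1)
    (ht : ‖t - z‖ ^ 2 + c * ‖p - t‖ ^ 2 ≤ ‖p - z‖ ^ 2) (hx' : x' = (1 - α - β) • p + α • t) :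
    ‖x' - z‖ ^ 2 ≤ (1 - β) * ‖p - z‖ ^ 2 - (1 - β) * α * c * ‖p - t‖ ^ 2
      + β * (2 * ⟪-z, x' - z⟫) := by
  set u := (1 - α - β) • (p - z) + α • (t - z)
  have hdecomp : x' - z = u + -(β • z) := by simp only [u, hx']; module
  have h1 : ‖x' - z‖ ^ 2 ≤ ‖u‖ ^ 2 + β * (2 * ⟪-z, x' - z⟫) := by
    have hsq := norm_add_sq_real u (-(β • z))
    have hinner : ⟪-(β • z), x' - z⟫ = β * ⟪-z, x' - z⟫ := by
      rw [← smul_neg, real_inner_smul_left]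
    rw [hdecomp, inner_add_right, real_inner_self_eq_norm_sq, real_inner_comm] at hinner
    rw [hdecomp]
    nlinarith [sq_nonneg ‖-(β • z)‖]
  have h2 : ‖u‖ ^ 2 ≤ (1 - β) * ((1 - α - β) * ‖p - z‖ ^ 2 + α * ‖t - z‖ ^ 2) := by
    simpa only [show 1 - α - β + α = 1 - β by ring] using
      norm_smul_add_smul_sq_le (show 0 ≤ 1 - α - β by linarith) hα (p - z) (t - z)
  have h1β : 0 ≤ 1 - β := by linarith
  nlinarith [mul_le_mul_of_nonneg_left ht (mul_nonneg h1β hα),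
    mul_nonneg (mul_nonneg hβ h1β) (sq_nonneg ‖p - z‖)]

end Step

variable {x : ℕ → H} {T : ℕ → H → H} {α β : ℕ → ℝ} {z : H} {c : ℝ}

theorem norm_iterate_sub_le_max (hα : ∀ n, 0 ≤ α n) (hβ : ∀ n, 0 ≤ β n)
    (hαβ : ∀ n, α n + β n ≤ 1) (hT : ∀ n p, ‖T n p - z‖ ≤ ‖p - z‖)
    (hx : ∀ n, x (n + 1) = (1 - α n - β n) • x n + α n • T n (x n)) (n : ℕ) :
    ‖x n - z‖ ≤ max ‖x 0 - z‖ ‖z‖ := by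
  induction n with
  | zero => exact le_max_left _ _
  | succ n ih =>
    rw [hx n]
    calc _ ≤ (1 - β n) * ‖x n - z‖ + β n * ‖z‖ := norm_step_sub_le (hα n) (hβ n) (hαβ n) (hT n _)
      _ ≤ (1 - β n) * max ‖x 0 - z‖ ‖z‖ + β n * max ‖x 0 - z‖ ‖z‖ :=
          add_le_add (mul_le_mul_of_nonneg_left ih (by linarith [hα n, hαβ n]))
            (mul_le_mul_of_nonneg_left (le_max_right _ _) (hβ n))
      _ = max ‖x 0 - z‖ ‖z‖ := by ring

theorem tendsto_residual_comp_of_damped_mann {α₀ R : ℝ} (hc : 0 < c) (hα₀ : 0 < α₀)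
    (hα : ∀ n, 0 ≤ α n) (hβ : ∀ n, 0 ≤ β n) (hαβ : ∀ n, α n + β n ≤ 1)
    (hαev : ∀ᶠ n in atTop, α₀ ≤ α n) (hβ0 : Tendsto β atTop (𝓝 0))
    (hT : ∀ n p, ‖T n p - z‖ ^ 2 + c * ‖p - T n p‖ ^ 2 ≤ ‖p - z‖ ^ 2)
    (hx : ∀ n, x (n + 1) = (1 - α n - β n) • x n + α n • T n (x n)) (hR : ∀ n, ‖x n - z‖ ≤ R)
    {ψ : ℕ → ℕ} (hψ : Tendsto ψ atTop atTop)
    (hd : LimsupNonpos fun n => ‖x (ψ n) - z‖ ^ 2 - ‖x (ψ n + 1) - z‖ ^ 2) :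
    Tendsto (fun n => ‖x (ψ n) - T (ψ n) (x (ψ n))‖) atTop (𝓝 0) := by
  set C := 2 * ‖z‖ * R
  have hkey : ∀ᶠ n in atTop, ‖x (ψ n) - T (ψ n) (x (ψ n))‖ ^ 2 ≤ 2 / (α₀ * c) *
      ((‖x (ψ n) - z‖ ^ 2 - ‖x (ψ n + 1) - z‖ ^ 2) + β (ψ n) * C) := by
    filter_upwards [hψ.eventually hαev, hψ.eventually (hβ0.limsupNonpos (1 / 2) one_half_pos)]
      with n hαn hβn
    set m := ψ n
    have hrec := sq_norm_step_sub_le (hα m) (hβ m) (hαβ m) (hT m (x m)) (hx m)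
    have hb : 2 * ⟪-z, x (m + 1) - z⟫ ≤ C := by
      have := (real_inner_le_norm (-z) (x (m + 1) - z)).trans
        (mul_le_mul_of_nonneg_left (hR (m + 1)) (norm_nonneg (-z)))
      rw [norm_neg] at this
      linarith
    have hcoef : α₀ / 2 ≤ (1 - β m) * α m := by nlinarith [hα m]
    have hres := mul_le_mul_of_nonneg_right hcoef
      (mul_nonneg hc.le (sq_nonneg ‖x m - T m (x m)‖))
    rw [div_mul_eq_mul_div, le_div_iff₀ (by positivity)]
    nlinarith [mul_le_mul_of_nonneg_left hb (hβ m), mul_nonneg (hβ m) (sq_nonneg ‖x m - z‖)]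
  have hbound : LimsupNonpos fun n => 2 / (α₀ * c) *
      ((‖x (ψ n) - z‖ ^ 2 - ‖x (ψ n + 1) - z‖ ^ 2) + β (ψ n) * C) :=
    (hd.add_tendsto_zero (by simpa using (hβ0.comp hψ).mul_const C)).const_mul (by positivity)
  have hsq := (hbound.mono hkey).tendsto_zero fun n => sq_nonneg _
  simpa using hsq.sqrt

theorem limsupNonpos_inner_comp_of_damped_mann [CompleteSpace H] {α₀ R : ℝ} (hc : 0 < c)
    (hα₀ : 0 < α₀) (hα : ∀ n, 0 ≤ α n) (hβ : ∀ n, 0 ≤ β n) (hαβ : ∀ n, α n + β n ≤ 1)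
    (hαev : ∀ᶠ n in atTop, α₀ ≤ α n) (hβ0 : Tendsto β atTop (𝓝 0))
    (hT : ∀ n p, ‖T n p - z‖ ^ 2 + c * ‖p - T n p‖ ^ 2 ≤ ‖p - z‖ ^ 2)
    (hcl : ∀ (φ : ℕ → ℕ) (w : H), WeakTendsto (x ∘ φ) w →
      Tendsto (fun k => ‖x (φ k) - T (φ k) (x (φ k))‖) atTop (𝓝 0) → ⟪-z, w - z⟫ ≤ 0)
    (hx : ∀ n, x (n + 1) = (1 - α n - β n) • x n + α n • T n (x n)) (hR : ∀ n, ‖x n - z‖ ≤ R)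
    {ψ : ℕ → ℕ} (hψ : Tendsto ψ atTop atTop)
    (hd : LimsupNonpos fun n => ‖x (ψ n) - z‖ ^ 2 - ‖x (ψ n + 1) - z‖ ^ 2) :
    LimsupNonpos fun n => 2 * ⟪-z, x (ψ n + 1) - z⟫ := by
  have hres := tendsto_residual_comp_of_damped_mann hc hα₀ hα hβ hαβ hαev hβ0 hT hx hR hψ hd
  have hxR : ∀ n, ‖x n‖ ≤ R + ‖z‖ := fun n => by
    linarith [norm_le_norm_add_norm_sub' (x n) z, hR n]
  have hweak : LimsupNonpos fun n => ⟪-z, x (ψ n)⟫ - ⟪-z, z⟫ :=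
    limsupNonpos_inner_sub_of_weak_cluster (fun n => hxR (ψ n)) (-z) _ fun φ w hφ hw => by
      have := hcl (ψ ∘ φ) w hw (hres.comp hφ.tendsto_atTop)
      rwa [inner_sub_right, sub_nonpos] at this
  have hstep : Tendsto (fun n => ⟪-z, x (ψ n + 1) - x (ψ n)⟫) atTop (𝓝 0) := by
    refine squeeze_zero_norm (fun n => ?_) (a := fun n => ‖z‖ *
      (‖x (ψ n) - T (ψ n) (x (ψ n))‖ + β (ψ n) * (R + ‖z‖))) ?_
    · have hmove : ‖x (ψ n + 1) - x (ψ n)‖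
          ≤ ‖x (ψ n) - T (ψ n) (x (ψ n))‖ + β (ψ n) * ‖x (ψ n)‖ := by
        rw [hx]
        exact norm_step_sub_self_le (hα _) (by linarith [hαβ (ψ n), hβ (ψ n)]) (hβ _)
      calc ‖⟪-z, x (ψ n + 1) - x (ψ n)⟫‖ ≤ ‖z‖ * ‖x (ψ n + 1) - x (ψ n)‖ := by
            simpa using norm_inner_le_norm (𝕜 := ℝ) (-z) (x (ψ n + 1) - x (ψ n))
        _ ≤ _ := by
            gcongr
            exact hmove.trans (by gcongr; exacts [hβ _, hxR _])
    · simpa using (hres.add ((hβ0.comp hψ).mul_const (R + ‖z‖))).const_mul ‖z‖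
  refine ((hweak.add_tendsto_zero hstep).const_mul zero_le_two).mono
    (Eventually.of_forall fun n => le_of_eq ?_)
  simp only [inner_sub_right]
  ring

theorem tendsto_of_damped_mann [CompleteSpace H] {α₀ : ℝ} (hc : 0 < c) (hα₀ : 0 < α₀)
    (hα : ∀ n, 0 ≤ α n) (hβ : ∀ n, 0 < β n) (hαβ : ∀ n, α n + β n ≤ 1)
    (hαev : ∀ᶠ n in atTop, α₀ ≤ α n) (hβ0 : Tendsto β atTop (𝓝 0)) (hβsum : ¬ Summable β)
    (hT : ∀ n p, ‖T n p - z‖ ^ 2 + c * ‖p - T n p‖ ^ 2 ≤ ‖p - z‖ ^ 2)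
    (hcl : ∀ (φ : ℕ → ℕ) (w : H), WeakTendsto (x ∘ φ) w →
      Tendsto (fun k => ‖x (φ k) - T (φ k) (x (φ k))‖) atTop (𝓝 0) → ⟪-z, w - z⟫ ≤ 0)
    (hx : ∀ n, x (n + 1) = (1 - α n - β n) • x n + α n • T n (x n)) :
    Tendsto x atTop (𝓝 z) := by
  have hβ' : ∀ n, 0 ≤ β n := fun n => (hβ n).le
  have hquasi : ∀ n p, ‖T n p - z‖ ≤ ‖p - z‖ := fun n p =>
    (pow_le_pow_iff_left₀ (norm_nonneg _) (norm_nonneg _) two_ne_zero).mp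
      (by nlinarith [hT n p, mul_nonneg hc.le (sq_nonneg ‖p - T n p‖)])
  have hR := norm_iterate_sub_le_max hα hβ' hαβ hquasi hx
  have hrec : ∀ n, ‖x (n + 1) - z‖ ^ 2 ≤ (1 - β n) * ‖x n - z‖ ^ 2
      + β n * (2 * ⟪-z, x (n + 1) - z⟫) := fun n => by
    have h := sq_norm_step_sub_le (hα n) (hβ' n) (hαβ n) (hT n (x n)) (hx n)
    have : 0 ≤ (1 - β n) * α n * c * ‖x n - T n (x n)‖ ^ 2 :=
      mul_nonneg (mul_nonneg (mul_nonneg (by linarith [hα n, hαβ n]) (hα n)) hc.le) (sq_nonneg _)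
    linarith
  have hsq : Tendsto (fun n => ‖x n - z‖ ^ 2) atTop (𝓝 0) :=
    tendsto_zero_of_mainge (fun n => sq_nonneg _) hβ (fun n => by linarith [hα n, hαβ n]) hβsum
      hrec fun ψ hψ hd =>
        limsupNonpos_inner_comp_of_damped_mann hc hα₀ hα hβ' hαβ hαev hβ0 hT hcl hx hR hψ hd
  rw [tendsto_iff_norm_sub_tendsto_zero]
  simpa using hsq.sqrt

end DampedMann

theorem stmt_15_general {H : Type*} [NormedAddCommGroup H] [InnerProductSpace ℝ H] [CompleteSpace H]
    (A : H → Set H)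
    (hA : ∀ x y u v, u ∈ A x → v ∈ A y → 0 ≤ ⟪u - v, x - y⟫)
    (γ : ℝ) (hγ : 0 < γ)
    (B : H → H) (hB : ∀ x y : H, γ * ‖B x - B y‖ ^ 2 ≤ ⟪B x - B y, x - y⟫)
    (hΩ : ∃ x : H, -B x ∈ A x)
    (hclosed : ∀ (y u : ℕ → H) (ybar : H),
      (∀ v : H, Tendsto (fun k => ⟪y k, v⟫) atTop (nhds ⟪ybar, v⟫)) →
      (∀ k, ∃ a ∈ A (y k), u k = a + B (y k)) →
      Tendsto (fun k => ‖u k‖) atTop (nhds 0) →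
      -B ybar ∈ A ybar)
    (ε : ℝ) (hε : 0 < ε)
    (τ α β : ℕ → ℝ)
    (hτ : ∀ n, 1 ≤ n → τ n ∈ Set.Ioo ε (2 * γ - ε))
    (J : ℕ → H → H)
    (hJ : ∀ n, 1 ≤ n → ∀ y : H, (1 / τ n) • (y - J n y) ∈ A (J n y))
    (hα : ∀ n, 1 ≤ n → α n ∈ Set.Ioo (0 : ℝ) 1)
    (hβ : ∀ n, 1 ≤ n → β n ∈ Set.Ioo (0 : ℝ) 1)
    (hαβ : ∀ n, 1 ≤ n → α n + β n ≤ 1)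
    (hαliminf : 0 < liminf (fun n => α n) atTop)
    (hβ0 : Tendsto β atTop (nhds 0))
    (hβsum : ¬ Summable β)
    (x : ℕ → H)
    (hx : ∀ n, 1 ≤ n →
      x (n + 1) = (1 - α n - β n) • x n + α n • J n (x n - τ n • B (x n))) :
    ∃ z : H, -B z ∈ A z ∧ (∀ q : H, -B q ∈ A q → ⟪-z, q - z⟫ ≤ 0) ∧
      Tendsto x atTop (nhds z) := by
  have hτ0 : ∀ n, 0 < τ (n + 1) := fun n => hε.trans (hτ _ le_add_self).1
  have hzeros : {q | -B q ∈ A q} = fixedPoints (forwardBackward (J 1) B (τ 1)) :=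
    zeros_eq_fixedPoints_forwardBackward hA (hτ0 0) (hJ 1 le_rfl)
  have hquasi := isQuasiNonexpansive_forwardBackward hA (hτ0 0) (hJ 1 le_rfl) hγ hB
    (by linarith [(hτ 1 le_rfl).2])
  obtain ⟨z, hz, hzmin⟩ := exists_mem_forall_inner_neg_sub_nonpos (s := {q | -B q ∈ A q}) hΩ
    (hzeros ▸ hquasi.isClosed_fixedPoints) (hzeros ▸ hquasi.convex_fixedPoints)
  have hαpos : ∀ᶠ n in atTop, liminf α atTop / 2 < α (n + 1) :=
    (tendsto_add_atTop_nat 1).eventually <| eventually_lt_of_lt_liminf (by linarith) <|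
      isBoundedUnder_of_eventually_ge (eventually_atTop.mpr ⟨1, fun n hn => (hα n hn).1.le⟩)
  refine ⟨z, hz, hzmin, (tendsto_add_atTop_iff_nat 1).mp ?_⟩
  -- the hypotheses hold from `n = 1` on, so the iteration is restarted at `x 1`
  refine tendsto_of_damped_mann (T := fun n => forwardBackward (J (n + 1)) B (τ (n + 1)))
    (c := ε / (2 * γ)) (by positivity) (half_pos hαliminf) (fun n => (hα _ le_add_self).1.le)
    (fun n => (hβ _ le_add_self).1) (fun n => hαβ _ le_add_self) (hαpos.mono fun n => le_of_lt)
    (hβ0.comp (tendsto_add_atTop_nat 1)) (fun h => hβsum ((summable_nat_add_iff 1).mp h))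
    (fun n => forwardBackward_sq_norm_sub_le hA (hτ0 n) (hJ _ le_add_self) hγ hB
      (hτ _ le_add_self).2.le hz) (fun φ w hw hr => hzmin w ?_) (fun n => hx _ le_add_self)
  exact neg_mem_of_weakTendsto_of_residual_tendsto_zero hγ hB hε hclosed
    (fun k => (hτ _ le_add_self).1.le) (fun k => hJ _ le_add_self) hw hr

theorem stmt_15 {H : Type*} [NormedAddCommGroup H] [InnerProductSpace ℝ H] [CompleteSpace H]
    (A : H → Set H)
    (hA : ∀ x y u v, u ∈ A x → v ∈ A y → 0 ≤ ⟪u - v, x - y⟫)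
    (γ : ℝ) (hγ : 0 < γ)
    (B : H → H) (hB : ∀ x y : H, γ * ‖B x - B y‖ ^ 2 ≤ ⟪B x - B y, x - y⟫)
    (hΩ : ∃ x : H, -B x ∈ A x)
    (hclosed : ∀ (y u : ℕ → H) (ybar : H),
      (∀ v : H, Tendsto (fun k => ⟪y k, v⟫) atTop (nhds ⟪ybar, v⟫)) →
      (∀ k, ∃ a ∈ A (y k), u k = a + B (y k)) →
      Tendsto (fun k => ‖u k‖) atTop (nhds 0) →
      -B ybar ∈ A ybar)
    (ε : ℝ) (hε : 0 < ε)
    (τ α β : ℕ → ℝ)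
    (hτ : ∀ n, 1 ≤ n → τ n ∈ Set.Ioo ε (2 * γ - ε))
    (J : ℕ → H → H)
    (hJ : ∀ n, 1 ≤ n → ∀ y : H, (1 / τ n) • (y - J n y) ∈ A (J n y))
    (hα : ∀ n, 1 ≤ n → α n ∈ Set.Ioo (0 : ℝ) 1)
    (hβ : ∀ n, 1 ≤ n → β n ∈ Set.Ioo (0 : ℝ) 1)
    (hαβ : ∀ n, 1 ≤ n → α n + β n ≤ 1)
    (hαliminf : 0 < liminf (fun n => α n) atTop)
    (hαlimsup : limsup (fun n => α n) atTop < 1)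
    (hβ0 : Tendsto β atTop (nhds 0))
    (hβsum : ¬ Summable β)
    (x : ℕ → H)
    (hx : ∀ n, 1 ≤ n →
      x (n + 1) = (1 - α n - β n) • x n + α n • J n (x n - τ n • B (x n))) :
    ∃ z : H, -B z ∈ A z ∧ (∀ q : H, -B q ∈ A q → ⟪-z, q - z⟫ ≤ 0) ∧
      Tendsto x atTop (nhds z) :=
  stmt_15_general A hA γ hγ B hB hΩ hclosed ε hε τ α β hτ J hJ hα hβ hαβ hαliminf hβ0 hβsum x hx
end
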